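/- Let (X, Σ) be a measurable space, let D be a probability measure on X × {−1, 1}, let M ≥ 1 and let f₁, …, f_M : X → {−1, 1} be measurable classifiers. Let δ ∈ (0, 1), let N ≥ 1, and let (x_j, y_j)_{j=1}^N be i.i.d. samples from D. Define the empirical error êrr(f) := (1/N)·|{ j ∈ {1,…,N} : f(x_j) ≠ y_j }|, and let î ∈ {1,…,M} be any index minimizing êrr(f_i). Then with probability at least 1 − δ over the N samples, err_D(f_{î}) ≤ min_{i ∈ {1,…,M}} err_D(f_i) + 2·√( log(2M/δ) / (2N) ). -/

import Mathlib

/-! For a single classifier the misclassification indicators of the samples are i.i.d. and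
`[0, 1]`-valued, with mean `err_D`, so Hoeffding's inequality bounds the probability that the
empirical error deviates from the true one by at least `ε` by `2 exp (-2 N ε²)`. With
`ε = √(log (2M/δ) / (2N))` a union bound over the `M` classifiers shows that, with probability
at least `1 - δ`, all deviations are below `ε`. On that event the empirical minimiser `f_î`
satisfies `err(f_î) ≤ êrr(f_î) + ε ≤ êrr(f_i) + ε ≤ err(f_i) + 2ε` for every `i`. -/

open MeasureTheory

/-- The two-element label set `{-1, 1}`. -/
abbrev Sign : Type := ({-1, 1} : Set ℤ)

/-- The error of classifier `c` with respect to distribution `D` on `X × {-1,1}`. -/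
noncomputable def errD {X : Type*} [MeasurableSpace X]
    (D : Measure (X × Sign)) (c : X → Sign) : ℝ :=
  (D {p | c p.1 ≠ p.2}).toReal

/-- The empirical error of classifier `c` on a sample of `N` labeled examples. -/
noncomputable def empErr {X : Type*} {N : ℕ} (c : X → Sign)
    (ω : Fin N → X × Sign) : ℝ :=
  ((Finset.univ.filter fun j : Fin N => c (ω j).1 ≠ (ω j).2).card : ℝ) / N

open ProbabilityTheory Real

section Hoeffding

variable {ι Y : Type*} [Fintype ι] [MeasurableSpace Y] {D : Measure Y} [IsProbabilityMeasure D]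
  {g : Y → ℝ} {a b : ℝ}

lemma measureReal_sum_sub_integral_ge_le (hg : Measurable g) (hgab : ∀ y, g y ∈ Set.Icc a b)
    {ε : ℝ} (hε : 0 ≤ ε) :
    (Measure.pi fun _ : ι => D).real {ω | ε ≤ ∑ i, (g (ω i) - ∫ y, g y ∂D)}
      ≤ exp (-2 * ε ^ 2 / (Fintype.card ι * (b - a) ^ 2)) := by
  have hcentered : HasSubgaussianMGF (fun y => g y - ∫ y, g y ∂D) ((‖b - a‖₊ / 2) ^ 2) D :=
    hasSubgaussianMGF_of_mem_Icc hg.aemeasurable (ae_of_all _ hgab)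
  have hindep : iIndepFun (fun i (ω : ι → Y) => g (ω i) - ∫ y, g y ∂D) (Measure.pi fun _ => D) :=
    iIndepFun_pi (X := fun _ y => g y - ∫ y, g y ∂D) fun _ => (hg.sub_const _).aemeasurable
  have hcoord (i : ι) : HasSubgaussianMGF (fun ω : ι → Y => g (ω i) - ∫ y, g y ∂D)
      ((‖b - a‖₊ / 2) ^ 2) (Measure.pi fun _ => D) := by
    refine HasSubgaussianMGF.of_map (X := fun y => g y - ∫ y, g y ∂D) (Y := fun ω : ι → Y => ω i)
      (measurable_pi_apply i).aemeasurable ?_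
    rw [(measurePreserving_eval (fun _ => D) i).map_eq]
    exact hcentered
  have hvar : ((∑ _i : ι, (‖b - a‖₊ / 2) ^ 2 : NNReal) : ℝ) = Fintype.card ι * (b - a) ^ 2 / 4 := by
    simp only [Finset.sum_const, Finset.card_univ, nsmul_eq_mul]
    push_cast [coe_nnnorm, norm_eq_abs, div_pow, sq_abs]
    ring
  refine (HasSubgaussianMGF.measure_sum_ge_le_of_iIndepFun hindep (s := Finset.univ)
    (fun i _ => hcoord i) hε).trans_eq ?_
  rw [hvar]
  generalize (Fintype.card ι : ℝ) * (b - a) ^ 2 = v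
  congr 1
  ring

lemma measureReal_abs_sum_sub_integral_ge_le (hg : Measurable g) (hgab : ∀ y, g y ∈ Set.Icc a b)
    {ε : ℝ} (hε : 0 ≤ ε) :
    (Measure.pi fun _ : ι => D).real {ω | ε ≤ |∑ i, (g (ω i) - ∫ y, g y ∂D)|}
      ≤ 2 * exp (-2 * ε ^ 2 / (Fintype.card ι * (b - a) ^ 2)) := by
  have hupper := measureReal_sum_sub_integral_ge_le (ι := ι) (D := D) hg hgab hε
  have hlower := measureReal_sum_sub_integral_ge_le (ι := ι) (D := D) hg.neg
    (fun y => ⟨neg_le_neg (hgab y).2, neg_le_neg (hgab y).1⟩) hε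
  rw [show -a - -b = b - a by ring] at hlower
  have hsplit : {ω : ι → Y | ε ≤ |∑ i, (g (ω i) - ∫ y, g y ∂D)|} ⊆
      {ω | ε ≤ ∑ i, (g (ω i) - ∫ y, g y ∂D)} ∪ {ω | ε ≤ ∑ i, (-g (ω i) - ∫ y, -g y ∂D)} := by
    intro ω (hω : ε ≤ |_|)
    have hneg : ∑ i, (-g (ω i) - ∫ y, -g y ∂D) = -∑ i, (g (ω i) - ∫ y, g y ∂D) := by
      rw [integral_neg, ← Finset.sum_neg_distrib]
      exact Finset.sum_congr rfl fun i _ => by ring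
    rcases le_abs'.mp hω with h | h
    · right
      simp only [Set.mem_ofPred_eq, hneg]
      linarith
    · exact Or.inl h
  calc _ ≤ _ := measureReal_mono hsplit
    _ ≤ _ := measureReal_union_le _ _
    _ ≤ _ := add_le_add hupper hlower
    _ = _ := (two_mul _).symm

end Hoeffding

section Classification

variable {X : Type*}

noncomputable def zeroOneLoss (c : X → Sign) : X × Sign → ℝ := {p | c p.1 ≠ p.2}.indicator 1

lemma measurableSet_misclassified [MeasurableSpace X] {c : X → Sign} (hc : Measurable c) :
    MeasurableSet {p : X × Sign | c p.1 ≠ p.2} :=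
  (measurableSet_eq_fun (hc.comp measurable_fst) measurable_snd).compl

lemma measurable_zeroOneLoss [MeasurableSpace X] {c : X → Sign} (hc : Measurable c) :
    Measurable (zeroOneLoss c) :=
  measurable_one.indicator (measurableSet_misclassified hc)

lemma zeroOneLoss_mem_Icc (c : X → Sign) (p : X × Sign) : zeroOneLoss c p ∈ Set.Icc 0 1 := by
  unfold zeroOneLoss
  by_cases h : c p.1 ≠ p.2 <;> simp [h]

lemma integral_zeroOneLoss [MeasurableSpace X] (D : Measure (X × Sign)) {c : X → Sign}
    (hc : Measurable c) :
    ∫ p, zeroOneLoss c p ∂D = errD D c :=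
  integral_indicator_one (measurableSet_misclassified hc)

lemma empErr_eq_sum_zeroOneLoss {N : ℕ} (c : X → Sign) (ω : Fin N → X × Sign) :
    empErr c ω = (∑ j, zeroOneLoss c (ω j)) / N := by
  rw [empErr, Finset.card_filter]
  push_cast
  simp [zeroOneLoss, Set.indicator_apply]

end Classification

section Deviation

variable {X : Type*} [MeasurableSpace X] (D : Measure (X × Sign)) [IsProbabilityMeasure D]
  {N : ℕ} {ε : ℝ}

lemma measureReal_abs_empErr_sub_errD_ge_le {c : X → Sign} (hc : Measurable c) (hN : 0 < N)
    (hε : 0 ≤ ε) :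
    (Measure.pi fun _ : Fin N => D).real {ω | ε ≤ |empErr c ω - errD D c|}
      ≤ 2 * exp (-2 * N * ε ^ 2) := by
  have hNpos : (0 : ℝ) < N := by exact_mod_cast hN
  have hsum (ω : Fin N → X × Sign) :
      ∑ j, (zeroOneLoss c (ω j) - ∫ p, zeroOneLoss c p ∂D) = N * (empErr c ω - errD D c) := by
    rw [integral_zeroOneLoss D hc, empErr_eq_sum_zeroOneLoss, Finset.sum_sub_distrib,
      Finset.sum_const, Finset.card_univ, Fintype.card_fin, nsmul_eq_mul]
    field_simp
  have hset : {ω : Fin N → X × Sign | ε ≤ |empErr c ω - errD D c|} =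
      {ω | N * ε ≤ |∑ j, (zeroOneLoss c (ω j) - ∫ p, zeroOneLoss c p ∂D)|} := by
    ext ω
    simp only [Set.mem_ofPred_eq, hsum, abs_mul, Nat.abs_cast, mul_le_mul_iff_right₀ hNpos]
  rw [hset]
  refine (measureReal_abs_sum_sub_integral_ge_le (measurable_zeroOneLoss hc)
    (zeroOneLoss_mem_Icc c) (by positivity)).trans_eq ?_
  rw [Fintype.card_fin, sub_zero, one_pow, mul_one]
  congr 2
  field_simp

lemma measureReal_exists_abs_empErr_sub_errD_ge_le {ι : Type*} [Fintype ι] {f : ι → X → Sign}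
    (hf : ∀ i, Measurable (f i)) (hN : 0 < N) (hε : 0 ≤ ε) :
    (Measure.pi fun _ : Fin N => D).real {ω | ∃ i, ε ≤ |empErr (f i) ω - errD D (f i)|}
      ≤ Fintype.card ι * (2 * exp (-2 * N * ε ^ 2)) := by
  rw [Set.ofPred_exists]
  refine (measureReal_iUnion_fintype_le _).trans ?_
  refine (Finset.sum_le_sum fun i _ =>
    measureReal_abs_empErr_sub_errD_ge_le D (hf i) hN hε).trans_eq ?_
  simp

end Deviation

lemma one_sub_measureReal_le_measureReal_compl {α : Type*} [MeasurableSpace α] (μ : Measure α)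
    [IsProbabilityMeasure μ] (s : Set α) : 1 - μ.real s ≤ μ.real sᶜ := by
  have := measureReal_union_le (μ := μ) s sᶜ
  rw [Set.union_compl_self, probReal_univ] at this
  linarith

lemma IsMinOn.le_inf'_add_two_mul {ι : Type*} {s : Finset ι} (hs : s.Nonempty) {R R' : ι → ℝ}
    {k : ι} {ε : ℝ} (hk : IsMinOn R' s k) (hks : k ∈ s) (hdev : ∀ i ∈ s, |R' i - R i| ≤ ε) :
    R k ≤ s.inf' hs R + 2 * ε := by
  obtain ⟨i, hi, hinf⟩ := s.exists_mem_eq_inf' hs R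
  rw [hinf]
  have hki := isMinOn_iff.mp hk i hi
  have hk' := abs_le.mp (hdev k hks)
  have hi' := abs_le.mp (hdev i hi)
  linarith [hk'.1, hi'.2]

/-- validation-set selection: if `î` (here `sel ω`) is any index
minimizing the empirical error on `N` i.i.d. validation samples, then with probability at
least `1 - δ`, `err_D(f_{î}) ≤ min_i err_D(f_i) + 2·√(log(2M/δ)/(2N))`. -/
theorem statement13 {X : Type*} [MeasurableSpace X]
    (D : Measure (X × Sign)) [IsProbabilityMeasure D]
    (M : ℕ) (hM : 1 ≤ M)
    (f : Fin M → X → Sign) (hf : ∀ i, Measurable (f i))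
    (δ : ℝ) (hδ0 : 0 < δ) (hδ1 : δ < 1) (N : ℕ) (hN : 1 ≤ N)
    (sel : (Fin N → X × Sign) → Fin M)
    (hsel : ∀ ω, ∀ i : Fin M, empErr (f (sel ω)) ω ≤ empErr (f i) ω) :
    ENNReal.ofReal (1 - δ) ≤
      (Measure.pi fun _ : Fin N => D)
        {ω | errD D (f (sel ω)) ≤
          (Finset.univ.inf' (Finset.univ_nonempty_iff.mpr ⟨⟨0, hM⟩⟩)
            fun i : Fin M => errD D (f i)) +
          2 * Real.sqrt (Real.log (2 * M / δ) / (2 * N))} := by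
  set ε := √(log (2 * M / δ) / (2 * N))
  have hMpos : (0 : ℝ) < M := by exact_mod_cast hM
  have hexp : exp (-2 * N * ε ^ 2) = δ / (2 * M) := by
    have hlog : 0 ≤ log (2 * M / δ) := log_nonneg <| by
      rw [le_div_iff₀ hδ0]
      linarith [(by exact_mod_cast hM : (1 : ℝ) ≤ M)]
    rw [sq_sqrt (by positivity), show -2 * N * (log (2 * M / δ) / (2 * N)) = -log (2 * M / δ) by
      field_simp, exp_neg, exp_log (by positivity), inv_div]
  set bad := {ω : Fin N → X × Sign | ∃ i, ε ≤ |empErr (f i) ω - errD D (f i)|}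
  have hbad : (Measure.pi fun _ : Fin N => D).real bad ≤ δ := by
    refine (measureReal_exists_abs_empErr_sub_errD_ge_le D hf hN (sqrt_nonneg _)).trans_eq ?_
    rw [hexp, Fintype.card_fin]
    field_simp
  have hgood := one_sub_measureReal_le_measureReal_compl (Measure.pi fun _ : Fin N => D) bad
  rw [← ofReal_measureReal]
  refine ENNReal.ofReal_le_ofReal ((by linarith : 1 - δ ≤ _).trans (measureReal_mono fun ω hω => ?_))
  simp only [bad, Set.mem_compl_iff, Set.mem_ofPred_eq, not_exists, not_le] at hω
  exact IsMinOn.le_inf'_add_two_mul _ (isMinOn_iff.mpr fun i _ => hsel ω i) (Finset.mem_univ _)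
    fun i _ => (hω i).le
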